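/- arXiv:2207.14634 — 2 statements merged into one kernel-verified Lean document; each statement's English description precedes it below -/
import Mathlib

section
/- Let T_L, T_R, D_L, D_R be reals with 4D_L − T_L² > 0, 4D_R − T_R² > 0, and T_L T_R < 0. Define μ = T_L/√(4D_L − T_L²) + T_R/√(4D_R − T_R²) and c_∞ = T_L (T_L² D_R − T_R² D_L). Then sign(μ) = sign(c_∞). -/
/-!
Write `μ = a + b` with `a = T_L / √(4D_L - T_L²)` and `b = T_R / √(4D_R - T_R²)`. Since `a` and `b`
have opposite signs, `a - b` has the sign of `a`, so `a + b` has the sign of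
`a (a + b)(a - b) = a (a² - b²)`. Clearing the positive denominators in `a² - b²` leaves
`4 (T_L² D_R - T_R² D_L)`, and `a` has the sign of `T_L`.
-/

namespace Real

theorem sign_eq_coe_signType_sign (r : ℝ) : Real.sign r = ((SignType.sign r : SignType) : ℝ) := by
  rcases lt_trichotomy r 0 with hr | rfl | hr
  · simp [sign_of_neg hr, hr]
  · simp [sign_zero]
  · simp [sign_of_pos hr, hr]

theorem sign_mul (x y : ℝ) : Real.sign (x * y) = Real.sign x * Real.sign y := by
  simp only [sign_eq_coe_signType_sign, _root_.sign_mul, SignType.coe_mul]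

theorem sign_mul_of_pos (x : ℝ) {c : ℝ} (hc : 0 < c) : Real.sign (x * c) = Real.sign x := by
  rw [sign_mul, sign_of_pos hc, mul_one]

theorem sign_sq_of_ne_zero {r : ℝ} (hr : r ≠ 0) : Real.sign r ^ 2 = 1 := by
  rcases sign_apply_eq_of_ne_zero r hr with h | h <;> simp [h]

theorem sign_sub_of_mul_neg {a b : ℝ} (hab : a * b < 0) : Real.sign (a - b) = Real.sign a := by
  rcases mul_neg_iff.mp hab with ⟨ha, hb⟩ | ⟨ha, hb⟩
  · rw [sign_of_pos ha, sign_of_pos (by linarith)]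
  · rw [sign_of_neg ha, sign_of_neg (by linarith)]

theorem sign_add_of_mul_neg {a b : ℝ} (hab : a * b < 0) :
    Real.sign (a + b) = Real.sign (a * (a ^ 2 - b ^ 2)) := by
  have ha : a ≠ 0 := by rintro rfl; simp at hab
  calc Real.sign (a + b) = Real.sign (a + b) * Real.sign a ^ 2 := by rw [sign_sq_of_ne_zero ha, mul_one]
    _ = Real.sign a * (Real.sign (a + b) * Real.sign (a - b)) := by rw [sign_sub_of_mul_neg hab]; ring
    _ = Real.sign (a * (a ^ 2 - b ^ 2)) := by rw [← sign_mul, ← sign_mul]; ring_nf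

end Real

theorem stmt_12 (TL TR DL DR : ℝ)
    (hL : 0 < 4 * DL - TL ^ 2) (hR : 0 < 4 * DR - TR ^ 2)
    (hT : TL * TR < 0) :
    Real.sign (TL / Real.sqrt (4 * DL - TL ^ 2) + TR / Real.sqrt (4 * DR - TR ^ 2))
      = Real.sign (TL * (TL ^ 2 * DR - TR ^ 2 * DL)) := by
  set sL := Real.sqrt (4 * DL - TL ^ 2)
  set sR := Real.sqrt (4 * DR - TR ^ 2)
  have hsL : 0 < sL := Real.sqrt_pos.2 hL
  have hsR : 0 < sR := Real.sqrt_pos.2 hR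
  have hab : TL / sL * (TR / sR) < 0 := by
    rw [div_mul_div_comm]; exact div_neg_of_neg_of_pos hT (mul_pos hsL hsR)
  have hcleared : TL / sL * ((TL / sL) ^ 2 - (TR / sR) ^ 2)
      = TL * (TL ^ 2 * DR - TR ^ 2 * DL) * (4 / (sL * (4 * DL - TL ^ 2) * (4 * DR - TR ^ 2))) := by
    rw [div_pow, div_pow, Real.sq_sqrt hL.le, Real.sq_sqrt hR.le]
    field_simp
    ring
  rw [Real.sign_add_of_mul_neg hab, hcleared, Real.sign_mul_of_pos _ (by positivity)]
end

section
/- Suppose y_L, y_R : J → ℝ are differentiable on an open interval J ⊆ (0,∞), W_L(y) = D_L y² − a_L T_L y + a_L², W_R(y) = D_R y² − a_R T_R y + a_R², and they satisfy y_L(y₀) W_L(y₀) y_L'(y₀) = y₀ W_L(y_L(y₀)) and y_R(y₀) W_R(y₀) y_R'(y₀) = y₀ W_R(y_R(y₀)), with y_L(y₀) < 0, y_R(y₀) < 0, W_L(y₀) > 0, W_R(y₀) > 0 on J. If y₀* ∈ J satisfies y_R(y₀*) = y_L(y₀*) =: y₁*, then sign(y_R'(y₀*) − y_L'(y₀*))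 = sign(c₀ + c₁ y₀* y₁* + c₂ (y₀* + y₁*)), where c₀ = a_R a_L (a_R T_L − a_L T_R), c₁ = a_R T_R D_L − a_L T_L D_R, c₂ = a_L² D_R − a_R² D_L. -/
/-!
At a zero `y₀` of the displacement, both solutions pass through the same point `y₁ = y_L(y₀)`,
so each ODE gives the slope `y'(y₀) = y₀ W(y₁) / (y₁ W(y₀))`. The difference of the two slopes is
therefore `y₀ / (y₁ W_L(y₀) W_R(y₀))` times the cross term `W_R(y₁) W_L(y₀) - W_L(y₁) W_R(y₀)`,
and this cross term of two quadratics with the same constant-term structure factors as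
`(y₁ - y₀) (c₀ + c₁ y₀ y₁ + c₂ (y₀ + y₁))`. Since `y₀ > 0 > y₁` and `W_L(y₀), W_R(y₀) > 0`, the
prefactor `y₀ (y₁ - y₀) / (y₁ W_L(y₀) W_R(y₀))` is positive.
-/

theorem Real.sign_mul_of_pos_s14 {k : ℝ} (hk : 0 < k) (x : ℝ) : Real.sign (k * x) = Real.sign x := by
  rcases lt_trichotomy x 0 with hx | rfl | hx
  · rw [Real.sign_of_neg hx, Real.sign_of_neg (mul_neg_of_pos_of_neg hk hx)]
  · rw [mul_zero]
  · rw [Real.sign_of_pos hx, Real.sign_of_pos (mul_pos hk hx)]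

theorem quadratic_cross_sub_eq (aL aR TL TR DL DR y₀ y₁ : ℝ) :
    (DR * y₁ ^ 2 - aR * TR * y₁ + aR ^ 2) * (DL * y₀ ^ 2 - aL * TL * y₀ + aL ^ 2)
      - (DL * y₁ ^ 2 - aL * TL * y₁ + aL ^ 2) * (DR * y₀ ^ 2 - aR * TR * y₀ + aR ^ 2)
      = (y₁ - y₀) * (aR * aL * (aR * TL - aL * TR) + (aR * TR * DL - aL * TL * DR) * y₀ * y₁
          + (aL ^ 2 * DR - aR ^ 2 * DL) * (y₀ + y₁)) := by
  ring

theorem sub_eq_of_mul_eq_mul {y₀ y₁ u v p q dR dL : ℝ} (hy₁ : y₁ ≠ 0) (hu : u ≠ 0) (hv : v ≠ 0)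
    (hR : y₁ * u * dR = y₀ * p) (hL : y₁ * v * dL = y₀ * q) :
    dR - dL = y₀ / (y₁ * v * u) * (p * v - q * u) := by
  field_simp
  linear_combination v * hR - u * hL

theorem stmt_14_general (aL aR TL TR DL DR : ℝ) (WL WR : ℝ → ℝ)
    (hWL : ∀ y, WL y = DL * y ^ 2 - aL * TL * y + aL ^ 2)
    (hWR : ∀ y, WR y = DR * y ^ 2 - aR * TR * y + aR ^ 2)
    (J : Set ℝ)
    (hJpos : J ⊆ Set.Ioi (0 : ℝ))
    (yL yR : ℝ → ℝ)
    (hodeL : ∀ y₀ ∈ J, yL y₀ * WL y₀ * deriv yL y₀ = y₀ * WL (yL y₀))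
    (hodeR : ∀ y₀ ∈ J, yR y₀ * WR y₀ * deriv yR y₀ = y₀ * WR (yR y₀))
    (hLneg : ∀ y₀ ∈ J, yL y₀ < 0)
    (hWLpos : ∀ y₀ ∈ J, 0 < WL y₀) (hWRpos : ∀ y₀ ∈ J, 0 < WR y₀)
    (c₀ c₁ c₂ : ℝ)
    (hc₀ : c₀ = aR * aL * (aR * TL - aL * TR))
    (hc₁ : c₁ = aR * TR * DL - aL * TL * DR)
    (hc₂ : c₂ = aL ^ 2 * DR - aR ^ 2 * DL)
    (y₀s y₁s : ℝ) (hy₀ : y₀s ∈ J) (heq : yR y₀s = yL y₀s) (hy₁ : y₁s = yL y₀s) :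
    Real.sign (deriv yR y₀s - deriv yL y₀s)
      = Real.sign (c₀ + c₁ * y₀s * y₁s + c₂ * (y₀s + y₁s)) := by
  have hy₀pos : 0 < y₀s := hJpos hy₀
  have hy₁neg : y₁s < 0 := hy₁ ▸ hLneg y₀s hy₀
  have hWL₀ := hWLpos y₀s hy₀
  have hWR₀ := hWRpos y₀s hy₀
  have hR := hodeR y₀s hy₀
  rw [heq, ← hy₁] at hR
  have hL := hodeL y₀s hy₀
  rw [← hy₁] at hL
  have hcross : WR y₁s * WL y₀s - WL y₁s * WR y₀s
      = (y₁s - y₀s) * (c₀ + c₁ * y₀s * y₁s + c₂ * (y₀s + y₁s)) := by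
    rw [hWL, hWL, hWR, hWR, hc₀, hc₁, hc₂]
    exact quadratic_cross_sub_eq aL aR TL TR DL DR y₀s y₁s
  have hfactor : 0 < y₀s * (y₁s - y₀s) / (y₁s * WL y₀s * WR y₀s) :=
    div_pos_of_neg_of_neg (mul_neg_of_pos_of_neg hy₀pos (by linarith))
      (mul_neg_of_neg_of_pos (mul_neg_of_neg_of_pos hy₁neg hWL₀) hWR₀)
  rw [sub_eq_of_mul_eq_mul hy₁neg.ne hWR₀.ne' hWL₀.ne' hR hL, hcross, ← mul_assoc,
    div_mul_eq_mul_div, Real.sign_mul_of_pos_s14 hfactor]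

theorem stmt_14 (aL aR TL TR DL DR : ℝ) (WL WR : ℝ → ℝ)
    (hWL : ∀ y, WL y = DL * y ^ 2 - aL * TL * y + aL ^ 2)
    (hWR : ∀ y, WR y = DR * y ^ 2 - aR * TR * y + aR ^ 2)
    (J : Set ℝ) (hJopen : IsOpen J) (hJconn : J.OrdConnected)
    (hJpos : J ⊆ Set.Ioi (0 : ℝ))
    (yL yR : ℝ → ℝ)
    (hdL : ∀ y₀ ∈ J, DifferentiableAt ℝ yL y₀)
    (hdR : ∀ y₀ ∈ J, DifferentiableAt ℝ yR y₀)
    (hodeL : ∀ y₀ ∈ J, yL y₀ * WL y₀ * deriv yL y₀ = y₀ * WL (yL y₀))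
    (hodeR : ∀ y₀ ∈ J, yR y₀ * WR y₀ * deriv yR y₀ = y₀ * WR (yR y₀))
    (hLneg : ∀ y₀ ∈ J, yL y₀ < 0) (hRneg : ∀ y₀ ∈ J, yR y₀ < 0)
    (hWLpos : ∀ y₀ ∈ J, 0 < WL y₀) (hWRpos : ∀ y₀ ∈ J, 0 < WR y₀)
    (c₀ c₁ c₂ : ℝ)
    (hc₀ : c₀ = aR * aL * (aR * TL - aL * TR))
    (hc₁ : c₁ = aR * TR * DL - aL * TL * DR)
    (hc₂ : c₂ = aL ^ 2 * DR - aR ^ 2 * DL)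
    (y₀s y₁s : ℝ) (hy₀ : y₀s ∈ J) (heq : yR y₀s = yL y₀s) (hy₁ : y₁s = yL y₀s) :
    Real.sign (deriv yR y₀s - deriv yL y₀s)
      = Real.sign (c₀ + c₁ * y₀s * y₁s + c₂ * (y₀s + y₁s)) :=
  stmt_14_general aL aR TL TR DL DR WL WR hWL hWR J hJpos yL yR hodeL hodeR hLneg hWLpos hWRpos c₀
    c₁ c₂ hc₀ hc₁ hc₂ y₀s y₁s hy₀ heq hy₁
end
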